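/- Suppose m > 3 and let ν^1, …, ν^m ∈ Λ²(ℝ^m) be arbitrary 2-vectors. If Σ_i ν^i ∧ θ_{ijk} = 0 in Λ^{m−1}(ℝ^m) for all j, k ∈ {1,…,m}, then ν^i = 0 for every i. -/

import Mathlib

open ExteriorAlgebra

/-- The degree-1 element θ^i : the i-th standard basis vector of ℝ^m. -/
noncomputable def θ (m : ℕ) (i : Fin m) : ExteriorAlgebra ℝ (Fin m → ℝ) :=
  ExteriorAlgebra.ι ℝ (Pi.single i 1)

/-- The volume element σ₀ = θ^1 ∧ ⋯ ∧ θ^m. -/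
noncomputable def σ₀ (m : ℕ) : ExteriorAlgebra ℝ (Fin m → ℝ) :=
  ((List.finRange m).map (θ m)).prod

/-- Left interior product with the dual basis covector ε^i. -/
noncomputable def contr (m : ℕ) (i : Fin m) (x : ExteriorAlgebra ℝ (Fin m → ℝ)) :
    ExteriorAlgebra ℝ (Fin m → ℝ) :=
  CliffordAlgebra.contractLeft (LinearMap.proj i) x

/-- θ_{i₁⋯i_p} : iterated contraction of σ₀ by ε^{i₁}, …, ε^{i_p} (in this order). -/
noncomputable def θdown (m : ℕ) (l : List (Fin m)) : ExteriorAlgebra ℝ (Fin m → ℝ) :=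
  l.foldl (fun x i => contr m i x) (σ₀ m)


/-!
Write `ν^i = ∑ N^i_{ab} θ^a θ^b` and let `A^i = N^i - (N^i)ᵀ`. Moving `θ^b` through the
contractions with the Leibniz rule `θ^b ∧ ι_k x = δ_{bk} x - ι_k (θ^b ∧ x)`, and using
`θ^b ∧ σ₀ = 0`, gives `ν^i ∧ θ_{ijk} = A^i_{jk} θ_i - A^i_{ik} θ_j + A^i_{ij} θ_k`.
As the `θ_l` are linearly independent, the hypothesis says
`A^l_{jk} = δ_{lj} t_k - δ_{lk} t_j` with `t_k = ∑_i A^i_{ik}`. Putting `l = j` and summing over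
`l` gives `t_k = (m - 1) t_k`, so `t = 0` because `m ≠ 2`; hence `A = 0` and `2 ν^i = 0`.
-/

open scoped Matrix

lemma eq_zero_of_forall_eq_ite_trace {K : Type*} [Field K] {m : ℕ} (hm : (m : K) ≠ 2)
    (A : Fin m → Matrix (Fin m) (Fin m) K)
    (h : ∀ l j k, A l j k =
      (if l = j then ∑ i, A i i k else 0) - (if l = k then ∑ i, A i i j else 0)) :
    A = 0 := by
  have htrace : ∀ k, ∑ i, A i i k = 0 := by
    intro k
    have hsum : ∑ i, A i i k = m * ∑ i, A i i k - ∑ i, A i i k :=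
      calc ∑ l, A l l k = ∑ l, (∑ i, A i i k - if l = k then ∑ i, A i i l else 0) :=
            Finset.sum_congr rfl fun l _ => by rw [h l l k, if_pos rfl]
        _ = m * ∑ i, A i i k - ∑ i, A i i k := by
            simp [Finset.sum_sub_distrib, Finset.sum_ite_eq']
    have hm2 : ((m : K) - 2) * ∑ i, A i i k = 0 := by linear_combination -hsum
    exact (mul_eq_zero.mp hm2).resolve_left (sub_ne_zero.mpr hm)
  ext l j k
  rw [h, htrace, htrace]
  simp

section

variable {m : ℕ}

lemma σ₀_eq_ιMulti : σ₀ m = ιMulti ℝ m (fun i => (Pi.single i 1 : Fin m → ℝ)) := by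
  rw [ιMulti_apply, σ₀, List.ofFn_eq_map]
  rfl

lemma θ_mul_σ₀ (a : Fin m) : θ m a * σ₀ m = 0 := by
  have h := ιMulti_eq_zero_of_not_inj (R := ℝ)
    (v := Fin.cons (Pi.single a 1 : Fin m → ℝ) fun i => Pi.single i 1) fun hinj =>
      Fin.succ_ne_zero a (hinj (by simp))
  rwa [ιMulti_succ_apply, Fin.cons_zero, Matrix.vecTail, Fin.cons_comp_succ,
    ← σ₀_eq_ιMulti] at h

lemma σ₀_ne_zero : σ₀ m ≠ 0 := by
  have h := (exteriorPower.ιMulti_family_linearIndependent_ofBasis ℝ m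
    (Pi.basisFun ℝ (Fin m))).ne_zero (Set.powersetCard.ofFinEmbEquiv (RelEmbedding.refl _))
  contrapose! h
  ext1
  rw [exteriorPower.ιMulti_family_apply_coe, ExteriorAlgebra.ιMulti_family,
    Equiv.symm_apply_apply, Submodule.coe_zero, ← h, σ₀_eq_ιMulti]
  congr 1
  ext1 i
  simp

lemma θ_mul_θ_anticomm (a b : Fin m) : θ m a * θ m b = -(θ m b * θ m a) :=
  eq_neg_of_add_eq_zero_left (ι_add_mul_swap _ _)

lemma ι_eq_sum_smul_θ (u : Fin m → ℝ) : ι ℝ u = ∑ a, u a • θ m a := by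
  simp only [θ, ← map_smul, ← map_sum]
  congr 1
  ext j
  simp [Pi.single_apply]

lemma contr_zero (i : Fin m) : contr m i 0 = 0 := map_zero _

lemma contr_sub (i : Fin m) (x y : ExteriorAlgebra ℝ (Fin m → ℝ)) :
    contr m i (x - y) = contr m i x - contr m i y := map_sub _ _ _

lemma contr_θ_mul (k b : Fin m) (x : ExteriorAlgebra ℝ (Fin m → ℝ)) :
    contr m k (θ m b * x) = (if k = b then x else 0) - θ m b * contr m k x := by
  have h := CliffordAlgebra.contractLeft_ι_mul (Q := 0) (LinearMap.proj k) (Pi.single b (1 : ℝ)) x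
  rwa [LinearMap.proj_apply, Pi.single_apply, ite_smul, one_smul, zero_smul] at h

lemma θ_mul_contr (b k : Fin m) (x : ExteriorAlgebra ℝ (Fin m → ℝ)) :
    θ m b * contr m k x = (if k = b then x else 0) - contr m k (θ m b * x) := by
  rw [contr_θ_mul, sub_sub_cancel]

lemma θdown_concat (l : List (Fin m)) (i : Fin m) :
    θdown m (l ++ [i]) = contr m i (θdown m l) :=
  List.foldl_concat _ _ _ _

lemma θ_mul_θdown_one (b i : Fin m) :
    θ m b * θdown m [i] = if i = b then σ₀ m else 0 := by
  rw [show θdown m [i] = contr m i (σ₀ m) from rfl, θ_mul_contr, θ_mul_σ₀, contr_zero, sub_zero]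

lemma θ_mul_θdown_two (b i j : Fin m) :
    θ m b * θdown m [i, j] =
      (if j = b then θdown m [i] else 0) - (if i = b then θdown m [j] else 0) := by
  rw [show θdown m [i, j] = contr m j (θdown m [i]) from rfl, θ_mul_contr, θ_mul_θdown_one,
    apply_ite (contr m j), contr_zero]
  rfl

lemma θ_mul_θdown_three (b i j k : Fin m) :
    θ m b * θdown m [i, j, k] =
      (if k = b then θdown m [i, j] else 0) - (if j = b then θdown m [i, k] else 0) +
        (if i = b then θdown m [j, k] else 0) := by
  rw [show θdown m [i, j, k] = contr m k (θdown m [i, j]) from rfl, θ_mul_contr,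
    θ_mul_θdown_two, contr_sub, apply_ite (contr m k), apply_ite (contr m k), contr_zero,
    ← θdown_concat, ← θdown_concat]
  abel

lemma linearIndependent_θdown_singleton : LinearIndependent ℝ fun i : Fin m => θdown m [i] := by
  refine Fintype.linearIndependent_iff.mpr fun c hc l => ?_
  have hl := congrArg (θ m l * ·) hc
  simp only [Finset.mul_sum, mul_smul_comm, θ_mul_θdown_one, smul_ite, smul_zero,
    Finset.sum_ite_eq', Finset.mem_univ, if_true, mul_zero] at hl
  exact (smul_eq_zero.mp hl).resolve_right σ₀_ne_zero

noncomputable def bivector (m : ℕ) :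
    Matrix (Fin m) (Fin m) ℝ →ₗ[ℝ] ExteriorAlgebra ℝ (Fin m → ℝ) where
  toFun N := ∑ a, ∑ b, N a b • (θ m a * θ m b)
  map_add' N N' := by simp only [Matrix.add_apply, add_smul, Finset.sum_add_distrib]
  map_smul' c N := by
    simp only [Matrix.smul_apply, smul_eq_mul, mul_smul, Finset.smul_sum, RingHom.id_apply]

lemma bivector_apply (N : Matrix (Fin m) (Fin m) ℝ) :
    bivector m N = ∑ a, ∑ b, N a b • (θ m a * θ m b) := rfl

lemma bivector_transpose (N : Matrix (Fin m) (Fin m) ℝ) : bivector m Nᵀ = -bivector m N := by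
  simp only [bivector_apply, Matrix.transpose_apply]
  rw [Finset.sum_comm, ← Finset.sum_neg_distrib]
  refine Finset.sum_congr rfl fun a _ => ?_
  rw [← Finset.sum_neg_distrib]
  refine Finset.sum_congr rfl fun b _ => ?_
  rw [θ_mul_θ_anticomm b a, smul_neg]

lemma bivector_sub_transpose (N : Matrix (Fin m) (Fin m) ℝ) :
    bivector m (N - Nᵀ) = (2 : ℝ) • bivector m N := by
  rw [map_sub, bivector_transpose, sub_neg_eq_add, two_smul]

lemma exteriorPower_two_le_range_bivector :
    ⋀[ℝ]^2 (Fin m → ℝ) ≤ LinearMap.range (bivector m) := by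
  rw [exteriorPower, pow_two]
  refine Submodule.mul_le.mpr ?_
  rintro _ ⟨u, rfl⟩ _ ⟨v, rfl⟩
  refine ⟨Matrix.vecMulVec u v, ?_⟩
  simp only [bivector_apply, ι_eq_sum_smul_θ, Finset.sum_mul, Finset.mul_sum,
    Matrix.vecMulVec_apply, smul_mul_smul_comm]
  exact Finset.sum_comm

lemma bivector_mul_θdown (N : Matrix (Fin m) (Fin m) ℝ) (i j k : Fin m) :
    bivector m N * θdown m [i, j, k] =
      (N - Nᵀ) j k • θdown m [i] - (N - Nᵀ) i k • θdown m [j] + (N - Nᵀ) i j • θdown m [k] := by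
  simp only [bivector_apply, Finset.sum_mul, smul_mul_assoc, mul_assoc, θ_mul_θdown_three,
    mul_add, mul_sub, mul_ite, mul_zero, θ_mul_θdown_two, smul_add, smul_sub, smul_ite, smul_zero,
    Finset.sum_add_distrib, Finset.sum_sub_distrib, Finset.sum_ite_eq, Finset.mem_univ, if_true,
    Matrix.sub_apply, Matrix.transpose_apply, sub_smul]
  abel

lemma sum_bivector_mul_θdown (N : Fin m → Matrix (Fin m) (Fin m) ℝ) (j k : Fin m) :
    ∑ i, bivector m (N i) * θdown m [i, j, k] =
      ∑ l, ((N l - (N l)ᵀ) j k - ((if l = j then ∑ i, (N i - (N i)ᵀ) i k else 0) -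
        (if l = k then ∑ i, (N i - (N i)ᵀ) i j else 0))) • θdown m [l] := by
  simp only [bivector_mul_θdown, Finset.sum_add_distrib, Finset.sum_sub_distrib, sub_smul,
    ite_smul, zero_smul, Finset.sum_ite_eq', Finset.mem_univ, if_true, Finset.sum_smul]
  abel

end

/-- If m > 3 and ν^1,…,ν^m ∈ Λ²(ℝ^m) satisfy Σ_i ν^i ∧ θ_{ijk} = 0 for all j,k, then every
ν^i vanishes. -/
theorem stmt12 (m : ℕ) (hm : 3 < m) (ν : Fin m → ExteriorAlgebra ℝ (Fin m → ℝ))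
    (hν : ∀ i, ν i ∈ ⋀[ℝ]^2 (Fin m → ℝ))
    (h : ∀ j k : Fin m, ∑ i : Fin m, ν i * θdown m [i, j, k] = 0) :
    ∀ i, ν i = 0 := by
  choose N hN using fun i => exteriorPower_two_le_range_bivector (hν i)
  have hA : (fun i => N i - (N i)ᵀ) = 0 := by
    refine eq_zero_of_forall_eq_ite_trace (by exact_mod_cast (by omega : m ≠ 2)) _
      fun l j k => sub_eq_zero.mp ?_
    have hjk : ∑ i, bivector m (N i) * θdown m [i, j, k] = 0 := by simpa only [hN] using h j k
    rw [sum_bivector_mul_θdown] at hjk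
    exact Fintype.linearIndependent_iff.mp linearIndependent_θdown_singleton _ hjk l
  intro i
  have h2ν : (2 : ℝ) • ν i = 0 := by
    rw [← hN, ← bivector_sub_transpose, congrFun hA i, Pi.zero_apply, map_zero]
  exact (smul_eq_zero.mp h2ν).resolve_left two_ne_zero
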